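/- arXiv:2510.07725 — 2 statements merged into one kernel-verified Lean document; each statement's English description precedes it below -/
import Mathlib

section
/- Let c: ℝ × ℝ → ℝ be Lipschitz in its second argument with constant L > 0. Let z' : ℝ be fixed, let Z : Ω → ℝ be a random variable on a probability space, let C > 0 and δ ∈ (0,1). If ℙ(|Z - z'| ≤ C) ≥ 1 - δ and c(z_q, z') ≥ L·C, then ℙ(c(z_q, Z) ≥ 0) ≥ 1 - δ. -/
open MeasureTheory ProbabilityTheory

theorem nonneg_of_abs_sub_le_of_lipschitz_margin {f : ℝ → ℝ} {L C x y : ℝ} (hL : 0 ≤ L)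
    (hf : |f x - f y| ≤ L * |x - y|) (hxy : |x - y| ≤ C) (hmargin : L * C ≤ f y) :
    0 ≤ f x :=
  calc 0 ≤ f y - L * C := sub_nonneg.mpr hmargin
    _ ≤ f y - L * |x - y| := by gcongr
    _ ≤ f y - |f x - f y| := by gcongr
    _ ≤ f x := by linarith [neg_abs_le (f x - f y)]

theorem cp_safe_footstep_probabilistic_general
    {Ω : Type*} [MeasureSpace Ω]
    (c : ℝ × ℝ → ℝ) (L : ℝ) (hL : 0 < L)
    (hLip : ∀ a x y : ℝ, |c (a, x) - c (a, y)| ≤ L * |x - y|)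
    (z_q z' : ℝ) (Z : Ω → ℝ) (C δ : ℝ)
    (hcov : ℙ {ω | |Z ω - z'| ≤ C} ≥ ENNReal.ofReal (1 - δ))
    (hcons : c (z_q, z') ≥ L * C) :
    ℙ {ω | c (z_q, Z ω) ≥ 0} ≥ ENNReal.ofReal (1 - δ) :=
  hcov.trans <| measure_mono fun ω hω =>
    nonneg_of_abs_sub_le_of_lipschitz_margin (f := fun z => c (z_q, z)) hL.le
      (hLip z_q (Z ω) z') hω hcons

theorem cp_safe_footstep_probabilistic
    {Ω : Type*} [MeasureSpace Ω] [IsProbabilityMeasure (ℙ : Measure Ω)]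
    (c : ℝ × ℝ → ℝ) (L : ℝ) (hL : 0 < L)
    (hLip : ∀ a x y : ℝ, |c (a, x) - c (a, y)| ≤ L * |x - y|)
    (z_q z' : ℝ) (Z : Ω → ℝ) (C δ : ℝ) (hC : 0 < C) (hδ : δ ∈ Set.Ioo (0:ℝ) 1)
    (hcov : ℙ {ω | |Z ω - z'| ≤ C} ≥ ENNReal.ofReal (1 - δ))
    (hcons : c (z_q, z') ≥ L * C) :
    ℙ {ω | c (z_q, Z ω) ≥ 0} ≥ ENNReal.ofReal (1 - δ) :=
  cp_safe_footstep_probabilistic_general c L hL hLip z_q z' Z C δ hcov hcons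
end

section
/- Let ω > 0 and consider the LIP dynamics ẍ = ω²(x - u) with initial state (x₀, v₀). If the orbital energy E = v₀²/2 - (ω²/2)(x₀ - u)² is positive and v₀ > 0, then v(t) > 0 for all t ≥ 0 and v(t) ≥ √(2E) for all t ≥ 0. -/
/-!
Write `a = ω (x₀ - u)` and `b = v₀`, so that `v t = a sinh (ω t) + b cosh (ω t)` and `2E = b² - a²`.
Hyperbolic rotations preserve `b² - a²`, so `v t ² ≥ 2E` at every time; positivity of `v t` follows
from `|a| < b` together with `|sinh| < cosh`.
-/

open Real

namespace Real

theorem abs_sinh_lt_cosh (θ : ℝ) : |sinh θ| < cosh θ := by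
  rw [abs_sinh, ← cosh_abs]
  exact sinh_lt_cosh _

theorem mul_sinh_add_mul_cosh_pos {a b : ℝ} (hab : |a| < b) (θ : ℝ) :
    0 < a * sinh θ + b * cosh θ := by
  calc 0 < (b - |a|) * cosh θ := mul_pos (by linarith) (cosh_pos θ)
    _ ≤ b * cosh θ - |a| * |sinh θ| := by nlinarith [abs_sinh_lt_cosh θ, abs_nonneg a]
    _ ≤ a * sinh θ + b * cosh θ := by
      nlinarith [neg_abs_le (a * sinh θ), abs_mul a (sinh θ)]

theorem sq_mul_sinh_add_mul_cosh_sub_sq (a b θ : ℝ) :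
    (a * sinh θ + b * cosh θ) ^ 2 - (a * cosh θ + b * sinh θ) ^ 2 = b ^ 2 - a ^ 2 := by
  linear_combination (b ^ 2 - a ^ 2) * cosh_sq_sub_sinh_sq θ

theorem sq_sub_sq_le_sq_mul_sinh_add_mul_cosh (a b θ : ℝ) :
    b ^ 2 - a ^ 2 ≤ (a * sinh θ + b * cosh θ) ^ 2 := by
  nlinarith [sq_mul_sinh_add_mul_cosh_sub_sq a b θ, sq_nonneg (a * cosh θ + b * sinh θ)]

end Real

theorem lip_positive_orbital_energy_velocity_general
    (ω x₀ v₀ u : ℝ)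
    (v : ℝ → ℝ)
    (hv : ∀ t, v t = ω * (x₀ - u) * Real.sinh (ω * t) + v₀ * Real.cosh (ω * t))
    (E : ℝ) (hE : E = v₀ ^ 2 / 2 - (ω ^ 2 / 2) * (x₀ - u) ^ 2)
    (hEpos : 0 < E) (hv₀ : 0 < v₀) :
    ∀ t : ℝ, 0 ≤ t → 0 < v t ∧ Real.sqrt (2 * E) ≤ v t := by
  intro t _
  have h2E : 2 * E = v₀ ^ 2 - (ω * (x₀ - u)) ^ 2 := by rw [hE]; ring
  have hlt : |ω * (x₀ - u)| < v₀ := abs_lt_of_sq_lt_sq (by linarith) hv₀.le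
  have hpos : 0 < v t := hv t ▸ mul_sinh_add_mul_cosh_pos hlt (ω * t)
  refine ⟨hpos, (sqrt_le_left hpos.le).2 ?_⟩
  rw [h2E, hv t]
  exact sq_sub_sq_le_sq_mul_sinh_add_mul_cosh _ _ _

theorem lip_positive_orbital_energy_velocity
    (ω x₀ v₀ u : ℝ) (hω : 0 < ω)
    (x v : ℝ → ℝ)
    (hx : ∀ t, x t = u + (x₀ - u) * Real.cosh (ω * t) + (v₀ / ω) * Real.sinh (ω * t))
    (hv : ∀ t, v t = ω * (x₀ - u) * Real.sinh (ω * t) + v₀ * Real.cosh (ω * t))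
    (E : ℝ) (hE : E = v₀ ^ 2 / 2 - (ω ^ 2 / 2) * (x₀ - u) ^ 2)
    (hEpos : 0 < E) (hv₀ : 0 < v₀) :
    ∀ t : ℝ, 0 ≤ t → 0 < v t ∧ Real.sqrt (2 * E) ≤ v t :=
  lip_positive_orbital_energy_velocity_general ω x₀ v₀ u v hv E hE hEpos hv₀
end
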